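/- Let R ∈ End(V⊗V) be an invertible solution of the Yang–Baxter equation and F ∈ End(V⊗V) invertible with R̃ := τ(F)⁻¹ R F. Suppose (a) R₂₃ F₁₂ F₁₃ = F₁₃ F₁₂ R₂₃ and (b) R̃₁₂ F₁₃ F₂₃ = F₂₃ F₁₃ R̃₁₂ hold in End(V⊗V⊗V). Then R̃ satisfies the Yang–Baxter equation R̃₁₂ R̃₁₃ R̃₂₃ = R̃₂₃ R̃₁₃ R̃₁₂. -/

import Mathlib

open TensorProduct

noncomputable section
variable (k V : Type*) [Field k] [AddCommGroup V] [Module k V]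

/-- The flip `P : V ⊗ V → V ⊗ V`. -/
def flipE : Module.End k (V ⊗[k] V) := (TensorProduct.comm k V V).toLinearMap

/-- `τ(X) = P X P`. -/
def tauE (X : Module.End k (V ⊗[k] V)) : Module.End k (V ⊗[k] V) :=
  flipE k V * X * flipE k V

/-- The embedding `X ↦ X₂₃` into `End(V ⊗ V ⊗ V)`. -/
def leg23 (X : Module.End k (V ⊗[k] V)) : Module.End k (V ⊗[k] (V ⊗[k] V)) :=
  LinearMap.lTensor V X

/-- The embedding `X ↦ X₁₂` into `End(V ⊗ V ⊗ V)`. -/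
def leg12 (X : Module.End k (V ⊗[k] V)) : Module.End k (V ⊗[k] (V ⊗[k] V)) :=
  (TensorProduct.assoc k V V V).toLinearMap ∘ₗ LinearMap.rTensor V X ∘ₗ
    (TensorProduct.assoc k V V V).symm.toLinearMap

/-- The flip of factors 1 and 2. -/
def P12 : Module.End k (V ⊗[k] (V ⊗[k] V)) := leg12 k V (flipE k V)

/-- The flip of factors 2 and 3. -/
def P23 : Module.End k (V ⊗[k] (V ⊗[k] V)) := leg23 k V (flipE k V)

/-- The embedding `X ↦ X₁₃`. -/
def leg13 (X : Module.End k (V ⊗[k] V)) : Module.End k (V ⊗[k] (V ⊗[k] V)) :=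
  P23 k V * leg12 k V X * P23 k V

/-- The Yang–Baxter equation `R₁₂R₁₃R₂₃ = R₂₃R₁₃R₁₂`. -/
def YB (R : Module.End k (V ⊗[k] V)) : Prop :=
  leg12 k V R * leg13 k V R * leg23 k V R = leg23 k V R * leg13 k V R * leg12 k V R

/-! Write `F₂₁ = τ(F)₁₂`, `F₃₁ = τ(F)₁₃`, `F₃₂ = τ(F)₂₃`, so that `F₂₁ R̃₁₂ = R₁₂ F₁₂`, and
similarly in the other legs. Conjugating (a) and (b) by the flips `P₁₂`, `P₂₃` gives
`R₁₃F₂₁F₂₃ = F₂₃F₂₁R₁₃`, `R₁₂F₃₁F₃₂ = F₃₂F₃₁R₁₂`,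
`R̃₁₃F₁₂F₃₂ = F₃₂F₁₂R̃₁₃`, `R̃₂₃F₂₁F₃₁ = F₃₁F₂₁R̃₂₃`.
Pushing the `F`'s through the triple products with these relations yields
`F₃₂F₃₁F₂₁ · R̃₁₂R̃₁₃R̃₂₃ = R₁₂R₁₃R₂₃ · F₁₂F₁₃F₂₃` and
`F₃₂F₃₁F₂₁ · R̃₂₃R̃₁₃R̃₁₂ = R₂₃R₁₃R₁₂ · F₁₂F₁₃F₂₃`,
so the Yang–Baxter equation for `R` gives it for `R̃` after cancelling the invertible
`F₃₂F₃₁F₂₁`. -/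

section Monoid
variable {M : Type*} [Monoid M]

def conjInvolution (p : M) (hp : p * p = 1) : M →* M where
  toFun x := p * x * p
  map_one' := by rw [mul_one, hp]
  map_mul' x y := by
    have hp' : ∀ z, p * (p * z) = z := fun z => by rw [← mul_assoc, hp, one_mul]
    simp only [mul_assoc, hp']

lemma conjInvolution_apply (p : M) (hp : p * p = 1) (x : M) :
    conjInvolution p hp x = p * x * p := rfl

lemma conjInvolution_conjInvolution (p : M) (hp : p * p = 1) (x : M) :
    conjInvolution p hp (conjInvolution p hp x) = x := by
  simp only [conjInvolution_apply, mul_assoc, hp, mul_one]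
  rw [← mul_assoc, hp, one_mul]

variable {r12 r13 r23 s12 s13 s23 f12 f13 f23 f21 f31 f32 : M}

theorem mul_twisted_triple_eq (t12 : f21 * s12 = r12 * f12) (t13 : f31 * s13 = r13 * f13)
    (t23 : f32 * s23 = r23 * f23) (h12 : SemiconjBy r12 (f31 * f32) (f32 * f31))
    (h23 : SemiconjBy r23 (f12 * f13) (f13 * f12)) (h13 : SemiconjBy s13 (f12 * f32) (f32 * f12)) :
    f32 * f31 * f21 * (s12 * s13 * s23) = r12 * r13 * r23 * (f12 * f13 * f23) :=
  calc f32 * f31 * f21 * (s12 * s13 * s23)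
      = f32 * f31 * (f21 * s12) * s13 * s23 := by simp only [mul_assoc]
    _ = f32 * f31 * r12 * f12 * s13 * s23 := by rw [t12]; simp only [mul_assoc]
    _ = r12 * f31 * (f32 * f12 * s13) * s23 := by rw [← h12.eq]; simp only [mul_assoc]
    _ = r12 * (f31 * s13) * f12 * (f32 * s23) := by rw [← h13.eq]; simp only [mul_assoc]
    _ = r12 * r13 * (f13 * f12 * r23) * f23 := by rw [t13, t23]; simp only [mul_assoc]
    _ = r12 * r13 * r23 * (f12 * f13 * f23) := by rw [← h23.eq]; simp only [mul_assoc]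

theorem mul_twisted_triple_rev_eq (t12 : f21 * s12 = r12 * f12) (t13 : f31 * s13 = r13 * f13)
    (t23 : f32 * s23 = r23 * f23) (h13 : SemiconjBy r13 (f21 * f23) (f23 * f21))
    (h12 : SemiconjBy s12 (f13 * f23) (f23 * f13)) (h23 : SemiconjBy s23 (f21 * f31) (f31 * f21)) :
    f32 * f31 * f21 * (s23 * s13 * s12) = r23 * r13 * r12 * (f12 * f13 * f23) :=
  calc f32 * f31 * f21 * (s23 * s13 * s12)
      = f32 * (f31 * f21 * s23) * s13 * s12 := by simp only [mul_assoc]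
    _ = f32 * s23 * f21 * (f31 * s13) * s12 := by rw [← h23.eq]; simp only [mul_assoc]
    _ = r23 * (f23 * f21 * r13) * f13 * s12 := by rw [t23, t13]; simp only [mul_assoc]
    _ = r23 * r13 * f21 * (f23 * f13 * s12) := by rw [← h13.eq]; simp only [mul_assoc]
    _ = r23 * r13 * (f21 * s12) * f13 * f23 := by rw [← h12.eq]; simp only [mul_assoc]
    _ = r23 * r13 * r12 * (f12 * f13 * f23) := by rw [t12]; simp only [mul_assoc]

theorem yangBaxter_of_twist (hf : IsLeftRegular (f32 * f31 * f21))
    (t12 : f21 * s12 = r12 * f12) (t13 : f31 * s13 = r13 * f13) (t23 : f32 * s23 = r23 * f23)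
    (hr12 : SemiconjBy r12 (f31 * f32) (f32 * f31)) (hr13 : SemiconjBy r13 (f21 * f23) (f23 * f21))
    (hr23 : SemiconjBy r23 (f12 * f13) (f13 * f12)) (hs12 : SemiconjBy s12 (f13 * f23) (f23 * f13))
    (hs13 : SemiconjBy s13 (f12 * f32) (f32 * f12)) (hs23 : SemiconjBy s23 (f21 * f31) (f31 * f21))
    (hr : r12 * r13 * r23 = r23 * r13 * r12) :
    s12 * s13 * s23 = s23 * s13 * s12 :=
  hf <| show f32 * f31 * f21 * _ = f32 * f31 * f21 * _ by
    rw [mul_twisted_triple_eq t12 t13 t23 hr12 hr23 hs13,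
      mul_twisted_triple_rev_eq t12 t13 t23 hr13 hs12 hs23, hr]

end Monoid

lemma flipE_mul_self : flipE k V * flipE k V = 1 :=
  TensorProduct.ext' fun _ _ => rfl

def tauHom : Module.End k (V ⊗[k] V) →* Module.End k (V ⊗[k] V) :=
  conjInvolution (flipE k V) (flipE_mul_self k V)

lemma tauHom_apply (X : Module.End k (V ⊗[k] V)) : tauHom k V X = tauE k V X := rfl

lemma tauE_mul_twist {F F' : Module.End k (V ⊗[k] V)} (R : Module.End k (V ⊗[k] V))
    (hF : F * F' = 1) : tauE k V F * (tauE k V F' * R * F) = R * F := by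
  rw [← mul_assoc, ← mul_assoc, ← tauHom_apply, ← tauHom_apply, ← map_mul, hF, map_one, one_mul]

lemma map_tauE_mul_map_twist {G N : Type*} [Monoid N] [FunLike G (Module.End k (V ⊗[k] V)) N]
    [MonoidHomClass G (Module.End k (V ⊗[k] V)) N] (φ : G) {F F' : Module.End k (V ⊗[k] V)}
    (R : Module.End k (V ⊗[k] V)) (hF : F * F' = 1) :
    φ (tauE k V F) * φ (tauE k V F' * R * F) = φ R * φ F := by
  rw [← map_mul, ← map_mul, tauE_mul_twist k V R hF]

def leg12Hom : Module.End k (V ⊗[k] V) →ₐ[k] Module.End k (V ⊗[k] (V ⊗[k] V)) :=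
  ((TensorProduct.assoc k V V V).conjAlgEquiv k).toAlgHom.comp (Module.End.rTensorAlgHom k _ V)

def leg23Hom : Module.End k (V ⊗[k] V) →ₐ[k] Module.End k (V ⊗[k] (V ⊗[k] V)) :=
  Module.End.lTensorAlgHom k _ V

lemma leg12Hom_apply (X : Module.End k (V ⊗[k] V)) : leg12Hom k V X = leg12 k V X := rfl

lemma leg23Hom_apply (X : Module.End k (V ⊗[k] V)) : leg23Hom k V X = leg23 k V X := rfl

lemma P12_mul_self : P12 k V * P12 k V = 1 := by
  rw [P12, ← leg12Hom_apply, ← map_mul, flipE_mul_self, map_one]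

lemma P23_mul_self : P23 k V * P23 k V = 1 := by
  rw [P23, ← leg23Hom_apply, ← map_mul, flipE_mul_self, map_one]

def conjP12 : Module.End k (V ⊗[k] (V ⊗[k] V)) →* Module.End k (V ⊗[k] (V ⊗[k] V)) :=
  conjInvolution (P12 k V) (P12_mul_self k V)

def conjP23 : Module.End k (V ⊗[k] (V ⊗[k] V)) →* Module.End k (V ⊗[k] (V ⊗[k] V)) :=
  conjInvolution (P23 k V) (P23_mul_self k V)

def leg13Hom : Module.End k (V ⊗[k] V) →* Module.End k (V ⊗[k] (V ⊗[k] V)) :=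
  (conjP23 k V).comp (leg12Hom k V)

def cycleE : Module.End k (V ⊗[k] (V ⊗[k] V)) :=
  ((TensorProduct.comm k V (V ⊗[k] V)).trans (TensorProduct.assoc k V V V)).toLinearMap

lemma P23_mul_P12 : P23 k V * P12 k V = cycleE k V :=
  TensorProduct.ext_threefold' fun _ _ _ => rfl

lemma cycle_mul_leg23 (X : Module.End k (V ⊗[k] V)) :
    cycleE k V * leg23 k V X = leg12 k V X * cycleE k V :=
  TensorProduct.ext' fun _ _ => by simp [cycleE, leg12, leg23, Module.End.mul_apply]

lemma conjP12_leg12 (X : Module.End k (V ⊗[k] V)) :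
    conjP12 k V (leg12 k V X) = leg12 k V (tauE k V X) := by
  simp only [conjP12, conjInvolution_apply, tauE, P12, ← leg12Hom_apply, map_mul]

lemma conjP12_leg23 (X : Module.End k (V ⊗[k] V)) : conjP12 k V (leg23 k V X) = leg13 k V X :=
  calc P12 k V * leg23 k V X * P12 k V
      = P23 k V * (P23 k V * P12 k V * leg23 k V X) * P12 k V := by
        rw [← mul_assoc, ← mul_assoc, P23_mul_self, one_mul]
    _ = P23 k V * leg12 k V X * P23 k V * (P12 k V * P12 k V) := by
        rw [P23_mul_P12, cycle_mul_leg23, ← P23_mul_P12]; simp only [mul_assoc]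
    _ = leg13 k V X := by rw [P12_mul_self, mul_one]; rfl

lemma conjP12_leg13 (X : Module.End k (V ⊗[k] V)) : conjP12 k V (leg13 k V X) = leg23 k V X := by
  rw [← conjP12_leg23, conjP12, conjInvolution_conjInvolution]

lemma conjP23_leg12 (X : Module.End k (V ⊗[k] V)) : conjP23 k V (leg12 k V X) = leg13 k V X :=
  rfl

lemma conjP23_leg13 (X : Module.End k (V ⊗[k] V)) : conjP23 k V (leg13 k V X) = leg12 k V X :=
  conjInvolution_conjInvolution _ _ _

lemma conjP23_leg23 (X : Module.End k (V ⊗[k] V)) :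
    conjP23 k V (leg23 k V X) = leg23 k V (tauE k V X) := by
  simp only [conjP23, conjInvolution_apply, tauE, P23, ← leg23Hom_apply, map_mul]

theorem factorized_twist
    (R F F' : Module.End k (V ⊗[k] V))
    (hF : F * F' = 1) (hF' : F' * F = 1)
    (hYB : YB k V R)
    (ha : leg23 k V R * (leg12 k V F * leg13 k V F) =
      (leg13 k V F * leg12 k V F) * leg23 k V R)
    (hb : leg12 k V (tauE k V F' * R * F) * (leg13 k V F * leg23 k V F) =
      (leg23 k V F * leg13 k V F) * leg12 k V (tauE k V F' * R * F)) :
    YB k V (tauE k V F' * R * F) := by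
  have hτF : IsUnit (tauE k V F) := (Units.isUnit ⟨F, F', hF, hF'⟩).map (tauHom k V)
  have ha₁₃ : SemiconjBy (leg13 k V R) (leg12 k V (tauE k V F) * leg23 k V F)
      (leg23 k V F * leg12 k V (tauE k V F)) := by
    simpa only [map_mul, conjP12_leg12, conjP12_leg13, conjP12_leg23]
      using SemiconjBy.map ha (conjP12 k V)
  have ha₁₂ : SemiconjBy (leg12 k V R) (leg13 k V (tauE k V F) * leg23 k V (tauE k V F))
      (leg23 k V (tauE k V F) * leg13 k V (tauE k V F)) := by
    simpa only [map_mul, conjP23_leg12, conjP23_leg13, conjP23_leg23] using ha₁₃.map (conjP23 k V)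
  have hb₁₃ : SemiconjBy (leg13 k V (tauE k V F' * R * F)) (leg12 k V F * leg23 k V (tauE k V F))
      (leg23 k V (tauE k V F) * leg12 k V F) := by
    simpa only [map_mul, conjP23_leg12, conjP23_leg13, conjP23_leg23]
      using SemiconjBy.map hb (conjP23 k V)
  have hb₂₃ : SemiconjBy (leg23 k V (tauE k V F' * R * F))
      (leg12 k V (tauE k V F) * leg13 k V (tauE k V F))
      (leg13 k V (tauE k V F) * leg12 k V (tauE k V F)) := by
    simpa only [map_mul, conjP12_leg12, conjP12_leg13, conjP12_leg23] using hb₁₃.map (conjP12 k V)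
  exact yangBaxter_of_twist
    (((hτF.map (leg23Hom k V)).mul (hτF.map (leg13Hom k V))).mul
      (hτF.map (leg12Hom k V))).isRegular.left
    (map_tauE_mul_map_twist k V (leg12Hom k V) R hF)
    (map_tauE_mul_map_twist k V (leg13Hom k V) R hF)
    (map_tauE_mul_map_twist k V (leg23Hom k V) R hF)
    ha₁₂ ha₁₃ ha hb hb₁₃ hb₂₃ hYB
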